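/- Let M, N be positive natural numbers and let d be a dataset of N instances with M binary protected attributes and a binary label. Suppose every vertex (level-0 hypercube) contains at least one instance. Then the worst-case statistical parity SP(K) = SR_max(K) − SR_min(K) is monotonically decreasing in the level K: for every K with 1 ≤ K ≤ M, SP(K) ≤ SP(K-1). -/

import Mathlib

/-- An attribute vector `v` belongs to the hypercube `x` if it matches all specified coordinates. -/
def Belongs {M : ℕ} (x : Fin M → Option Bool) (v : Fin M → Bool) : Prop :=
  ∀ i : Fin M, ∀ b : Bool, x i = some b → v i = b

instance {M : ℕ} (x : Fin M → Option Bool) (v : Fin M → Bool) : Decidable (Belongs x v) := by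
  unfold Belongs; infer_instance

/-- The level of a hypercube: the number of its stars (unspecified coordinates). -/
def level {M : ℕ} (x : Fin M → Option Bool) : ℕ :=
  (Finset.univ.filter fun i => x i = none).card

/-- `cnt d x` = N(x): the number of instances of the dataset `d` belonging to `x`. -/
def cnt {M N : ℕ} (d : Fin N → (Fin M → Bool) × Bool) (x : Fin M → Option Bool) : ℕ :=
  (Finset.univ.filter fun n => Belongs x (d n).1).card

/-- `cnt1 d x` = N¹(x): the number of instances belonging to `x` with label `true`. -/
def cnt1 {M N : ℕ} (d : Fin N → (Fin M → Bool) × Bool) (x : Fin M → Option Bool) : ℕ :=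
  (Finset.univ.filter fun n => Belongs x (d n).1 ∧ (d n).2 = true).card

/-- The success rate SR(x) = N¹(x)/N(x). -/
def SR {M N : ℕ} (d : Fin N → (Fin M → Bool) × Bool) (x : Fin M → Option Bool) : ℚ :=
  (cnt1 d x : ℚ) / (cnt d x : ℚ)

/-- The finset of all hypercubes of level `K`. -/
def levelSet (M K : ℕ) : Finset (Fin M → Option Bool) :=
  Finset.univ.filter fun x => level x = K

/-- SR_min(K): minimum success rate over all hypercubes of level `K`
(the level set is nonempty whenever `K ≤ M`, so the junk value `0` is never used there). -/
def SRmin {M N : ℕ} (d : Fin N → (Fin M → Bool) × Bool) (K : ℕ) : ℚ :=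
  (((levelSet M K).image (SR d)).min).untopD 0

/-- SR_max(K): maximum success rate over all hypercubes of level `K`. -/
def SRmax {M N : ℕ} (d : Fin N → (Fin M → Bool) × Bool) (K : ℕ) : ℚ :=
  (((levelSet M K).image (SR d)).max).unbotD 0

/-- The worst-case statistical parity at level K. -/
def SP {M N : ℕ} (d : Fin N → (Fin M → Bool) × Bool) (K : ℕ) : ℚ :=
  SRmax d K - SRmin d K

/-
Splitting a hypercube `x` of level `K + 1` at one of its stars yields two hypercubes of level `K`
whose instances partition those of `x`. Hence `SR(x)` is the mediant of their success rates (their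
denominators are positive because every vertex is populated), and a mediant lies between the two
fractions. So every rate at level `K + 1` is bounded above and below by rates at level `K`.
-/

lemma min_div_le_add_div_add {a b c e : ℚ} (hc : 0 < c) (he : 0 < e) :
    min (a / c) (b / e) ≤ (a + b) / (c + e) := by
  rw [le_div_iff₀ (by positivity)]
  rcases min_cases (a / c) (b / e) with ⟨hm, hle⟩ | ⟨hm, hlt⟩ <;> rw [hm]
  · have := (div_le_div_iff₀ hc he).mp hle
    field_simp
    linarith
  · have := (div_lt_div_iff₀ he hc).mp hlt
    field_simp
    linarith

lemma add_div_add_le_max {a b c e : ℚ} (hc : 0 < c) (he : 0 < e) :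
    (a + b) / (c + e) ≤ max (a / c) (b / e) := by
  have := min_div_le_add_div_add (a := -a) (b := -b) hc he
  rw [neg_div, neg_div, min_neg_neg, ← neg_add, neg_div] at this
  linarith

section Hypercube

variable {M : ℕ}

lemma belongs_update_some_iff {x : Fin M → Option Bool} {i : Fin M} (hi : x i = none)
    (b : Bool) (v : Fin M → Bool) :
    Belongs (Function.update x i (some b)) v ↔ Belongs x v ∧ v i = b := by
  constructor
  · intro h
    refine ⟨fun j b' hj => h j b' ?_, h i b (by simp)⟩
    have hji : j ≠ i := by rintro rfl; simp [hi] at hj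
    rwa [Function.update_of_ne hji]
  · rintro ⟨hx, hb⟩ j b' hj
    rcases eq_or_ne j i with rfl | hji
    · simp_all
    · exact hx j b' (by rwa [Function.update_of_ne hji] at hj)

lemma card_filter_belongs_eq_add {α : Type*} (s : Finset α) (f : α → Fin M → Bool)
    {x : Fin M → Option Bool} {i : Fin M} (hi : x i = none) :
    (s.filter fun a => Belongs x (f a)).card =
      (s.filter fun a => Belongs (Function.update x i (some false)) (f a)).card +
      (s.filter fun a => Belongs (Function.update x i (some true)) (f a)).card := by
  simp only [belongs_update_some_iff hi, ← Finset.filter_filter, Bool.eq_false_iff, ne_eq]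
  rw [add_comm, Finset.card_filter_add_card_filter_not]

lemma level_update_some (x : Fin M → Option Bool) {i : Fin M} (hi : x i = none) (b : Bool) :
    level (Function.update x i (some b)) = level x - 1 := by
  have hstars : (Finset.univ.filter fun j => Function.update x i (some b) j = none) =
      (Finset.univ.filter fun j => x j = none).erase i := by
    ext j
    rcases eq_or_ne j i with rfl | hji
    · simp
    · simp [hji]
  rw [level, level, hstars, Finset.card_erase_of_mem (by simp [hi])]

lemma exists_eq_none_of_level_pos {x : Fin M → Option Bool} (hx : 0 < level x) :
    ∃ i, x i = none := by
  obtain ⟨i, hi⟩ := Finset.card_pos.mp hx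
  exact ⟨i, (Finset.mem_filter.mp hi).2⟩

end Hypercube

section Dataset

variable {M N : ℕ} (d : Fin N → (Fin M → Bool) × Bool)

lemma cnt_eq_add {x : Fin M → Option Bool} {i : Fin M} (hi : x i = none) :
    cnt d x = cnt d (Function.update x i (some false)) + cnt d (Function.update x i (some true)) :=
  card_filter_belongs_eq_add _ _ hi

lemma cnt1_eq_add {x : Fin M → Option Bool} {i : Fin M} (hi : x i = none) :
    cnt1 d x =
      cnt1 d (Function.update x i (some false)) + cnt1 d (Function.update x i (some true)) := by
  simp only [cnt1, and_comm (a := Belongs _ _), ← Finset.filter_filter]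
  exact card_filter_belongs_eq_add _ _ hi

lemma cnt_pos_of_forall_vertex (hvert : ∀ v : Fin M → Bool, 0 < cnt d (fun i => some (v i)))
    (x : Fin M → Option Bool) : 0 < cnt d x := by
  refine (hvert fun i => (x i).getD true).trans_le (Finset.card_le_card ?_)
  intro n hn
  simp only [Finset.mem_filter, Finset.mem_univ, true_and] at hn ⊢
  intro i b hib
  simpa [hib] using hn i _ rfl

variable {d}

lemma SR_mem_Icc_of_split (hvert : ∀ v : Fin M → Bool, 0 < cnt d (fun i => some (v i)))
    {x : Fin M → Option Bool} {i : Fin M} (hi : x i = none) :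
    SR d x ∈ Set.Icc (min (SR d (Function.update x i (some false)))
        (SR d (Function.update x i (some true))))
      (max (SR d (Function.update x i (some false))) (SR d (Function.update x i (some true)))) := by
  have h0 : (0 : ℚ) < cnt d (Function.update x i (some false)) :=
    mod_cast cnt_pos_of_forall_vertex d hvert _
  have h1 : (0 : ℚ) < cnt d (Function.update x i (some true)) :=
    mod_cast cnt_pos_of_forall_vertex d hvert _
  have hSR : SR d x = (cnt1 d (Function.update x i (some false)) +
      cnt1 d (Function.update x i (some true)) : ℚ) /
      (cnt d (Function.update x i (some false)) + cnt d (Function.update x i (some true))) := by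
    rw [SR, cnt_eq_add d hi, cnt1_eq_add d hi]
    push_cast
    rfl
  rw [hSR]
  exact ⟨min_div_le_add_div_add h0 h1, add_div_add_le_max h0 h1⟩

lemma exists_SR_bounds_of_mem_levelSet_succ
    (hvert : ∀ v : Fin M → Bool, 0 < cnt d (fun i => some (v i)))
    {K : ℕ} {x : Fin M → Option Bool} (hx : x ∈ levelSet M (K + 1)) :
    (∃ y ∈ levelSet M K, SR d y ≤ SR d x) ∧ ∃ y ∈ levelSet M K, SR d x ≤ SR d y := by
  have hlevel : level x = K + 1 := (Finset.mem_filter.mp hx).2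
  obtain ⟨i, hi⟩ := exists_eq_none_of_level_pos (x := x) (by omega)
  have hmem (b : Bool) : Function.update x i (some b) ∈ levelSet M K := by
    simp [levelSet, level_update_some x hi, hlevel]
  obtain ⟨hmin, hmax⟩ := SR_mem_Icc_of_split hvert hi
  constructor
  · rcases min_choice (SR d (Function.update x i (some false)))
      (SR d (Function.update x i (some true))) with h | h <;> rw [h] at hmin
    exacts [⟨_, hmem false, hmin⟩, ⟨_, hmem true, hmin⟩]
  · rcases max_choice (SR d (Function.update x i (some false)))
      (SR d (Function.update x i (some true))) with h | h <;> rw [h] at hmax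
    exacts [⟨_, hmem false, hmax⟩, ⟨_, hmem true, hmax⟩]

variable (d)

lemma SRmax_eq_max' {K : ℕ} (h : (levelSet M K).Nonempty) :
    SRmax d K = ((levelSet M K).image (SR d)).max' (h.image _) := by
  rw [SRmax, ← Finset.coe_max' (h.image _)]
  rfl

lemma SRmin_eq_min' {K : ℕ} (h : (levelSet M K).Nonempty) :
    SRmin d K = ((levelSet M K).image (SR d)).min' (h.image _) := by
  rw [SRmin, ← Finset.coe_min' (h.image _)]
  rfl

lemma SP_nonneg (K : ℕ) : 0 ≤ SP d K := by
  rw [SP, sub_nonneg]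
  rcases (levelSet M K).eq_empty_or_nonempty with h | h
  · simp [SRmin, SRmax, h]
  · rw [SRmin_eq_min' d h, SRmax_eq_max' d h]
    exact Finset.min'_le_max' _ (h.image _)

variable {d}

lemma levelSet_nonempty_of_succ (hvert : ∀ v : Fin M → Bool, 0 < cnt d (fun i => some (v i)))
    {K : ℕ} (h : (levelSet M (K + 1)).Nonempty) : (levelSet M K).Nonempty := by
  obtain ⟨x, hx⟩ := h
  obtain ⟨⟨y, hy, -⟩, -⟩ := exists_SR_bounds_of_mem_levelSet_succ hvert hx
  exact ⟨y, hy⟩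

lemma SRmax_succ_le (hvert : ∀ v : Fin M → Bool, 0 < cnt d (fun i => some (v i)))
    {K : ℕ} (h : (levelSet M (K + 1)).Nonempty) : SRmax d (K + 1) ≤ SRmax d K := by
  rw [SRmax_eq_max' d h, SRmax_eq_max' d (levelSet_nonempty_of_succ hvert h)]
  refine Finset.max'_le _ _ _ fun r hr => ?_
  obtain ⟨x, hx, rfl⟩ := Finset.mem_image.mp hr
  obtain ⟨-, y, hy, hxy⟩ := exists_SR_bounds_of_mem_levelSet_succ hvert hx
  exact hxy.trans (Finset.le_max' _ _ (Finset.mem_image_of_mem _ hy))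

lemma SRmin_le_SRmin_succ (hvert : ∀ v : Fin M → Bool, 0 < cnt d (fun i => some (v i)))
    {K : ℕ} (h : (levelSet M (K + 1)).Nonempty) : SRmin d K ≤ SRmin d (K + 1) := by
  rw [SRmin_eq_min' d h, SRmin_eq_min' d (levelSet_nonempty_of_succ hvert h)]
  refine Finset.le_min' _ _ _ fun r hr => ?_
  obtain ⟨x, hx, rfl⟩ := Finset.mem_image.mp hr
  obtain ⟨⟨y, hy, hyx⟩, -⟩ := exists_SR_bounds_of_mem_levelSet_succ hvert hx
  exact (Finset.min'_le _ _ (Finset.mem_image_of_mem _ hy)).trans hyx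

/- Above level `M` there are no hypercubes and `SP` takes the junk value `0`, which is still
below every `SP d K` because `SP` is nonnegative. -/
theorem SP_antitone (hvert : ∀ v : Fin M → Bool, 0 < cnt d (fun i => some (v i))) :
    Antitone (SP d) := by
  refine antitone_nat_of_succ_le fun K => ?_
  rcases (levelSet M (K + 1)).eq_empty_or_nonempty with h | h
  · simpa [SP, SRmin, SRmax, h] using SP_nonneg d K
  · have hmax := SRmax_succ_le hvert h
    have hmin := SRmin_le_SRmin_succ hvert h
    rw [SP, SP]
    linarith

end Dataset

theorem SP_anti_general (M N : ℕ)
    (d : Fin N → (Fin M → Bool) × Bool)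
    (hvert : ∀ v : Fin M → Bool, 0 < cnt d (fun i => some (v i)))
    (K : ℕ) :
    SP d K ≤ SP d (K - 1) :=
  SP_antitone hvert (Nat.sub_le K 1)

/-- If every vertex contains at least one instance, the worst-case statistical
parity is monotonically decreasing in the level. -/
theorem SP_anti (M N : ℕ) (hM : 0 < M) (hN : 0 < N)
    (d : Fin N → (Fin M → Bool) × Bool)
    (hvert : ∀ v : Fin M → Bool, 0 < cnt d (fun i => some (v i)))
    (K : ℕ) (hK1 : 1 ≤ K) (hKM : K ≤ M) :
    SP d K ≤ SP d (K - 1) :=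
  SP_anti_general M N d hvert K
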